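/- Let n ≥ 2 be even and let A be any n×n real matrix. Then Σ_{σ,γ ∈ S_n} sgn(σ) sgn(γ) · ( Π_{t=1}^n A_{σ(t) γ(t)} ) · ( Π_{t=1}^n A_{σ(t) γ(t+1)} ) = 0, where in the second product γ(t+1) is read cyclically, so the factor for t = n is A_{σ(n) γ(1)}. -/

import Mathlib

open Finset Equiv

/-!
Reindex the sum by `σ ↦ σ ∘ (t ↦ -t)` and `γ ↦ γ ∘ (t ↦ 1 - t)`. Substituting `t ↦ -t` in the
products shows that this swaps the two products of each summand, while it multiplies the sign
by `sgn(t ↦ -t) · sgn(t ↦ 1 - t) = sgn(t ↦ t + 1)`, the sign of an `n`-cycle, which is `-1` for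
even `n`. So the reindexing is a fixed-point-free involution reversing the sign of every summand.
-/

namespace Equiv.Perm

variable {G R : Type*} [AddCommGroup G] [Fintype G] [DecidableEq G] [CommRing R]

def signedShiftProd (A : Matrix G G R) (a : G) (σ γ : Perm G) : R :=
  ((sign σ : ℤ) : R) * ((sign γ : ℤ) : R) * (∏ t, A (σ t) (γ t)) * ∏ t, A (σ t) (γ (t + a))

theorem sign_neg_mul_sign_subLeft (a : G) :
    sign (Equiv.neg G) * sign (Equiv.subLeft a) = sign (Equiv.addLeft a) := by
  have : Equiv.subLeft a = Equiv.addLeft a * Equiv.neg G := by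
    ext x
    simp [sub_eq_add_neg]
  rw [this, sign_mul, mul_left_comm, Int.units_mul_self, mul_one]

theorem signedShiftProd_mul_neg_mul_subLeft (A : Matrix G G R) (a : G) (σ γ : Perm G) :
    signedShiftProd A a (σ * Equiv.neg G) (γ * Equiv.subLeft a) =
      (sign (Equiv.addLeft a) : ℤ) * signedShiftProd A a σ γ := by
  have shifted : ∏ t, A (σ (-t)) (γ (a - t)) = ∏ t, A (σ t) (γ (t + a)) :=
    Fintype.prod_equiv (Equiv.neg G) _ _ fun t => by simp [sub_eq_add_neg, add_comm]
  have unshifted : ∏ t, A (σ (-t)) (γ (a - (t + a))) = ∏ t, A (σ t) (γ t) :=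
    Fintype.prod_equiv (Equiv.neg G) _ _ fun t => by simp
  simp only [signedShiftProd, sign_mul, mul_apply, neg_apply, subLeft_apply, shifted, unshifted,
    ← sign_neg_mul_sign_subLeft a, Units.val_mul, Int.cast_mul]
  ring

theorem sum_sum_signedShiftProd_eq_zero (A : Matrix G G R) {a : G}
    (ha : sign (Equiv.addLeft a) = -1) :
    ∑ σ : Perm G, ∑ γ : Perm G, signedShiftProd A a σ γ = 0 := by
  rw [← Fintype.sum_prod_type']
  refine sum_ninvolution (fun p => (p.1 * Equiv.neg G, p.2 * Equiv.subLeft a)) (fun p => ?_)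
    (fun p _ => ?_) (fun _ => mem_univ _) (fun p => ?_)
  · rw [signedShiftProd_mul_neg_mul_subLeft, ha]
    simp
  · intro hfix
    have hneg : Equiv.neg G = 1 := mul_eq_left.1 (congrArg Prod.fst hfix)
    have hsub : Equiv.subLeft a = 1 := mul_eq_left.1 (congrArg Prod.snd hfix)
    rw [← sign_neg_mul_sign_subLeft, hneg, hsub, sign_one, mul_one] at ha
    exact absurd ha (by decide)
  · ext x <;> simp [sub_sub_cancel]

theorem _root_.Fin.sign_addLeft_one (n : ℕ) :
    sign (Equiv.addLeft (1 : Fin (n + 1))) = (-1) ^ n := by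
  have : Equiv.addLeft (1 : Fin (n + 1)) = finRotate (n + 1) := by
    ext i
    simp [add_comm]
  rw [this, sign_finRotate, Nat.add_sub_cancel]

end Equiv.Perm

open Equiv.Perm in
/-- For even `n ≥ 2` and any real `n × n` matrix `A`,
`∑ σ γ, sgn σ * sgn γ * (∏ t, A (σ t) (γ t)) * (∏ t, A (σ t) (γ (t+1))) = 0`,
where `t + 1` is read cyclically in `Fin n` (so the factor for the last `t` is
`A (σ (n-1)) (γ 0)`). -/
theorem even_n_cancellation
    (n : ℕ) (hn : 2 ≤ n) (heven : Even n) (A : Matrix (Fin n) (Fin n) ℝ) :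
    ∑ σ : Equiv.Perm (Fin n), ∑ γ : Equiv.Perm (Fin n),
      ((Equiv.Perm.sign σ : ℤ) : ℝ) * ((Equiv.Perm.sign γ : ℤ) : ℝ) *
        (∏ t : Fin n, A (σ t) (γ t)) *
        (∏ t : Fin n, A (σ t) (γ (t + ⟨1, by omega⟩))) = 0 := by
  obtain ⟨m, rfl⟩ : ∃ m, n = m + 2 := ⟨n - 2, by omega⟩
  have hodd : Odd (m + 1) := (by simpa [parity_simps] using heven : Even m).add_one
  have hsign : sign (Equiv.addLeft (1 : Fin (m + 2))) = -1 := by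
    rw [Fin.sign_addLeft_one, hodd.neg_one_pow]
  -- the statement's `⟨1, _⟩ : Fin (m + 2)` is definitionally `1`
  exact sum_sum_signedShiftProd_eq_zero A hsign
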